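/- arXiv:1604.06611 — 8 statements merged into one kernel-verified Lean document; each statement's English description precedes it below -/
import Mathlib

section
/- If the bounded linear operator B : W → V*, (Bw)(v) = ℬ(w,v), associated with the bounded bilinear form ℬ is a bijection onto V* with continuous inverse, then ℬ satisfies condition (BNB1) with constant c_B ≥ ‖B⁻¹‖⁻¹ > 0 and condition (BNB2). -/
/-!
A left inverse `B⁻¹` gives `‖w‖ ≤ ‖B⁻¹‖ ‖Bw‖`, and for a real functional the operator norm is
dominated by the supremum of the signed quotients `(Bw)(v) / ‖v‖` (test `v` and `-v`); this is
(BNB1). For (BNB2), Hahn–Banach provides a functional that is positive at a given `v ≠ 0`, and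
surjectivity of `B` realises it as some `Bw`.
-/

namespace ContinuousLinearMap

variable {𝕜 E F : Type*} [NontriviallyNormedField 𝕜] [NormedAddCommGroup E] [NormedSpace 𝕜 E]
  [NormedAddCommGroup F] [NormedSpace 𝕜 F]

theorem inv_norm_mul_norm_le_of_leftInverse {f : E →L[𝕜] F} {g : F →L[𝕜] E}
    (h : Function.LeftInverse g f) (x : E) : ‖g‖⁻¹ * ‖x‖ ≤ ‖f x‖ := by
  rcases (norm_nonneg g).eq_or_lt with hg | hg
  · simp [← hg]
  · rw [inv_mul_le_iff₀ hg]
    simpa only [h x] using g.le_opNorm (f x)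

theorem norm_pos_of_leftInverse [Nontrivial E] {f : E →L[𝕜] F} {g : F →L[𝕜] E}
    (h : Function.LeftInverse g f) : 0 < ‖g‖ := by
  obtain ⟨x, hx⟩ := exists_ne (0 : E)
  refine norm_pos_iff.2 fun hg => hx ?_
  rw [← h x, hg, zero_apply]

theorem norm_le_iSup_div_norm {V : Type*} [NormedAddCommGroup V] [NormedSpace ℝ V]
    (f : V →L[ℝ] ℝ) : ‖f‖ ≤ ⨆ v : {v : V // v ≠ 0}, f v / ‖(v : V)‖ := by
  set S := ⨆ v : {v : V // v ≠ 0}, f v / ‖(v : V)‖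
  have hbdd : BddAbove (Set.range fun v : {v : V // v ≠ 0} => f v / ‖(v : V)‖) := by
    refine ⟨‖f‖, ?_⟩
    rintro _ ⟨v, rfl⟩
    exact div_le_of_le_mul₀ (norm_nonneg _) (norm_nonneg f)
      ((Real.le_norm_self _).trans (f.le_opNorm v))
  have hle : ∀ v, f v ≤ S * ‖v‖ := by
    intro v
    rcases eq_or_ne v 0 with rfl | hv
    · simp
    · exact (div_le_iff₀ (norm_pos_iff.2 hv)).1 (le_ciSup hbdd ⟨v, hv⟩)
  have habs : ∀ v, ‖f v‖ ≤ S * ‖v‖ := fun v =>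
    abs_le.2 ⟨neg_le.1 (by simpa using hle (-v)), hle v⟩
  have hS : 0 ≤ S := by
    rcases isEmpty_or_nonempty {v : V // v ≠ 0} with hV | ⟨v, hv⟩
    · exact (Real.iSup_of_isEmpty _).ge
    · exact nonneg_of_mul_nonneg_left ((norm_nonneg _).trans (habs v)) (norm_pos_iff.2 hv)
  exact f.opNorm_le_bound hS habs

end ContinuousLinearMap

theorem exists_pos_apply_of_surjective {W V : Type*} [NormedAddCommGroup V] [NormedSpace ℝ V]
    {B : W → V →L[ℝ] ℝ} (hB : Function.Surjective B) {v : V} (hv : v ≠ 0) :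
    ∃ w, 0 < B w v := by
  obtain ⟨g, -, hg⟩ := exists_dual_vector ℝ v (norm_ne_zero_iff.2 hv)
  obtain ⟨w, rfl⟩ := hB g
  exact ⟨w, hg ▸ norm_pos_iff.2 hv⟩

theorem bnb_necessity_general
    {W V : Type*} [NormedAddCommGroup W] [InnerProductSpace ℝ W]
    [NormedAddCommGroup V] [InnerProductSpace ℝ V] [Nontrivial W]
    (B : W →L[ℝ] V →L[ℝ] ℝ) (Binv : (V →L[ℝ] ℝ) →L[ℝ] W)
    (hleft : ∀ w : W, Binv (B w) = w)
    (hright : ∀ F : V →L[ℝ] ℝ, B (Binv F) = F) :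
    0 < ‖Binv‖⁻¹ ∧
    (∀ w : W, ‖Binv‖⁻¹ * ‖w‖ ≤ ⨆ v : {v : V // v ≠ 0}, B w v / ‖(v : V)‖) ∧
    (∀ v : V, v ≠ 0 → ∃ w : W, 0 < B w v) :=
  ⟨inv_pos.2 (ContinuousLinearMap.norm_pos_of_leftInverse hleft),
    fun w => (ContinuousLinearMap.inv_norm_mul_norm_le_of_leftInverse hleft w).trans
      (B w).norm_le_iSup_div_norm,
    fun _ hv => exists_pos_apply_of_surjective (Function.RightInverse.surjective hright) hv⟩

/-- **Banach–Nečas–Babuška, necessity direction.**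
If the bounded linear operator `B : W → V*` associated with the bounded bilinear form
`ℬ : W × V → ℝ` is a bijection onto `V*` with continuous inverse `B⁻¹`, then `ℬ` satisfies
condition (BNB1) with constant `c_B = ‖B⁻¹‖⁻¹ > 0` and condition (BNB2). -/
theorem bnb_necessity
    {W V : Type*} [NormedAddCommGroup W] [InnerProductSpace ℝ W] [CompleteSpace W]
    [NormedAddCommGroup V] [InnerProductSpace ℝ V] [CompleteSpace V] [Nontrivial W]
    (B : W →L[ℝ] V →L[ℝ] ℝ) (Binv : (V →L[ℝ] ℝ) →L[ℝ] W)
    (hleft : ∀ w : W, Binv (B w) = w)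
    (hright : ∀ F : V →L[ℝ] ℝ, B (Binv F) = F) :
    0 < ‖Binv‖⁻¹ ∧
    (∀ w : W, ‖Binv‖⁻¹ * ‖w‖ ≤ ⨆ v : {v : V // v ≠ 0}, B w v / ‖(v : V)‖) ∧
    (∀ v : V, v ≠ 0 → ∃ w : W, 0 < B w v) :=
  bnb_necessity_general B Binv hleft hright
end

section
/- Assume W and V are nontrivial and the bounded bilinear form ℬ satisfies condition (BNB1) with some constant c_B > 0 and condition (BNB2). Then the two inf-sup constants coincide: inf_{0≠w∈W} sup_{0≠v∈V} ℬ(w,v)/(‖w‖_W‖v‖_V) = inf_{0≠v∈V} sup_{0≠w∈W} ℬ(w,v)/(‖w‖_W‖v‖_V), i.e. the spaces over which the infimum and supremum are taken may be interchanged. -/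
/-!
Let `T : W → V` be the operator representing `ℬ` through the inner product of `V`, so that
`ℬ(w, v) = ⟪T w, v⟫ = ⟪w, T† v⟫`. The inner suprema are then `‖T w‖ / ‖w‖` and `‖T† v‖ / ‖v‖`.
(BNB1) makes `T` bounded below, hence injective with closed range, and (BNB2) makes that range
dense, so `T` has a bounded inverse `S`, and `T†` has the inverse `S†`. Both infima equal
`‖S‖⁻¹ = ‖S†‖⁻¹`.
-/

open RealInnerProductSpace ContinuousLinearMap

section InnerSup

variable {E : Type*} [NormedAddCommGroup E] [InnerProductSpace ℝ E] [Nontrivial E]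

lemma iSup_inner_div_mul_norm (x : E) {a : ℝ} (ha : 0 ≤ a) :
    ⨆ v : {v : E // v ≠ 0}, ⟪x, (v : E)⟫ / (a * ‖(v : E)‖) = ‖x‖ / a := by
  have hle : ∀ v : {v : E // v ≠ 0}, ⟪x, (v : E)⟫ / (a * ‖(v : E)‖) ≤ ‖x‖ / a := fun v => by
    have hv : ‖(v : E)‖ ≠ 0 := norm_ne_zero_iff.mpr v.2
    calc ⟪x, (v : E)⟫ / (a * ‖(v : E)‖)
        ≤ ‖x‖ * ‖(v : E)‖ / (a * ‖(v : E)‖) := by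
          gcongr
          exact real_inner_le_norm x v
      _ = ‖x‖ / a := mul_div_mul_right _ _ hv
  obtain ⟨v₀, hv₀⟩ := exists_ne (0 : E)
  have hattained : ∃ v : {v : E // v ≠ 0}, ⟪x, (v : E)⟫ / (a * ‖(v : E)‖) = ‖x‖ / a := by
    by_cases hx : x = 0
    · exact ⟨⟨v₀, hv₀⟩, by simp [hx]⟩
    · refine ⟨⟨x, hx⟩, ?_⟩
      have hx' : ‖x‖ ≠ 0 := norm_ne_zero_iff.mpr hx
      rw [real_inner_self_eq_norm_mul_norm, mul_comm a, mul_div_mul_left _ _ hx']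
  obtain ⟨v, hv⟩ := hattained
  have : Nonempty {v : E // v ≠ 0} := ⟨v⟩
  exact le_antisymm (ciSup_le hle) (hv ▸ le_ciSup ⟨_, Set.forall_mem_range.mpr hle⟩ v)

end InnerSup

section InverseNorm

variable {𝕜 E F : Type*} [NontriviallyNormedField 𝕜] [NormedAddCommGroup E] [NormedSpace 𝕜 E]
  [NormedAddCommGroup F] [NormedSpace 𝕜 F]

lemma iInf_norm_apply_div_norm_eq_inv_norm [Nontrivial E] {T : E →L[𝕜] F} {S : F →L[𝕜] E}
    (hST : S ∘L T = .id 𝕜 E) (hTS : T ∘L S = .id 𝕜 F) :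
    ⨅ x : {x : E // x ≠ 0}, ‖T x‖ / ‖(x : E)‖ = ‖S‖⁻¹ := by
  have hST' (x : E) : S (T x) = x := congr($hST x)
  have hTS' (y : F) : T (S y) = y := congr($hTS y)
  obtain ⟨x₀, hx₀⟩ := exists_ne (0 : E)
  have : Nonempty {x : E // x ≠ 0} := ⟨⟨x₀, hx₀⟩⟩
  have hS : 0 < ‖S‖ := norm_pos_iff.mpr fun h => hx₀ (by simpa [h] using (hST' x₀).symm)
  have hlower (x : {x : E // x ≠ 0}) : ‖S‖⁻¹ ≤ ‖T x‖ / ‖(x : E)‖ := by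
    rw [le_div_iff₀ (norm_pos_iff.mpr x.2), inv_mul_le_iff₀ hS]
    simpa only [hST'] using S.le_opNorm (T x)
  refine le_antisymm ?_ (le_ciInf hlower)
  set c := ⨅ x : {x : E // x ≠ 0}, ‖T x‖ / ‖(x : E)‖
  rcases le_or_gt c 0 with hc | hc
  · exact hc.trans (inv_nonneg.mpr hS.le)
  have hbdd : BddBelow (Set.range fun x : {x : E // x ≠ 0} => ‖T x‖ / ‖(x : E)‖) :=
    ⟨0, Set.forall_mem_range.mpr fun _ => by positivity⟩
  -- `c` bounds `T` below, so `c⁻¹` bounds `S` above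
  have hSle : ‖S‖ ≤ c⁻¹ := by
    refine S.opNorm_le_bound (inv_nonneg.mpr hc.le) fun y => ?_
    rcases eq_or_ne (S y) 0 with hy | hy
    · rw [hy, norm_zero]
      positivity
    have h := ciInf_le hbdd ⟨S y, hy⟩
    rw [hTS', le_div_iff₀ (norm_pos_iff.mpr hy)] at h
    rwa [inv_mul_eq_div, le_div_iff₀ hc, mul_comm]
  exact (le_inv_comm₀ hc hS).mpr hSle

end InverseNorm

section BoundedBelow

variable {𝕜 E F : Type*} [RCLike 𝕜] [NormedAddCommGroup E] [InnerProductSpace 𝕜 E]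
  [CompleteSpace E] [NormedAddCommGroup F] [InnerProductSpace 𝕜 F] [CompleteSpace F]

lemma ContinuousLinearMap.range_eq_top_of_antilipschitz {T : E →L[𝕜] F} {K : NNReal}
    (hT : AntilipschitzWith K T) (hdense : ∀ y ≠ 0, ∃ x, inner 𝕜 (T x) y ≠ 0) :
    T.range = ⊤ := by
  have : CompleteSpace T.range :=
    (hT.isClosed_range T.uniformContinuous).completeSpace_coe
  rw [← Submodule.orthogonal_eq_bot_iff, Submodule.eq_bot_iff]
  intro y hy
  by_contra hy0
  obtain ⟨x, hx⟩ := hdense y hy0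
  exact hx <| Submodule.inner_right_of_mem_orthogonal
    (LinearMap.mem_range_self (T : E →ₗ[𝕜] F) x) hy

lemma ContinuousLinearMap.exists_inverse_of_bounded_below {T : E →L[𝕜] F} {c : ℝ} (hc : 0 < c)
    (hT : ∀ x, c * ‖x‖ ≤ ‖T x‖) (hdense : ∀ y ≠ 0, ∃ x, inner 𝕜 (T x) y ≠ 0) :
    ∃ S : F →L[𝕜] E, S ∘L T = .id 𝕜 E ∧ T ∘L S = .id 𝕜 F := by
  have hanti : AntilipschitzWith c⁻¹.toNNReal T :=
    T.antilipschitz_of_bound fun x => by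
      rw [Real.coe_toNNReal _ (inv_nonneg.mpr hc.le), inv_mul_eq_div, le_div_iff₀ hc, mul_comm]
      exact hT x
  let e := ContinuousLinearEquiv.ofBijective T (LinearMap.ker_eq_bot.mpr hanti.injective)
    (T.range_eq_top_of_antilipschitz hanti hdense)
  refine ⟨e.symm, ?_, ?_⟩
  · simpa only [e, ContinuousLinearEquiv.coe_ofBijective] using e.coe_symm_comp_coe
  · simpa only [e, ContinuousLinearEquiv.coe_ofBijective] using e.coe_comp_coe_symm

end BoundedBelow

section Representation

variable {W V : Type*} [NormedAddCommGroup W] [InnerProductSpace ℝ W]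
  [NormedAddCommGroup V] [InnerProductSpace ℝ V] [CompleteSpace V]

noncomputable def ContinuousLinearMap.bilinRepr (B : W →L[ℝ] V →L[ℝ] ℝ) : W →L[ℝ] V :=
  LinearMap.mkContinuous
    { toFun := fun w => (InnerProductSpace.toDual ℝ V).symm (B w)
      map_add' := fun _ _ => by simp
      map_smul' := fun _ _ => by simp }
    ‖B‖ fun w => by simpa using B.le_opNorm w

@[simp]
lemma ContinuousLinearMap.inner_bilinRepr_apply (B : W →L[ℝ] V →L[ℝ] ℝ) (w : W) (v : V) :
    ⟪B.bilinRepr w, v⟫ = B w v :=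
  InnerProductSpace.toDual_symm_apply

end Representation

/-- **Interchanging the inf-sup spaces.**
If `W` and `V` are nontrivial real Hilbert spaces and the bounded bilinear form
`ℬ : W × V → ℝ` satisfies (BNB1) with some constant `c_B > 0` and (BNB2), then
`inf_{0≠w∈W} sup_{0≠v∈V} ℬ(w,v)/(‖w‖‖v‖) = inf_{0≠v∈V} sup_{0≠w∈W} ℬ(w,v)/(‖w‖‖v‖)`. -/
theorem infsup_interchange
    {W V : Type*} [NormedAddCommGroup W] [InnerProductSpace ℝ W] [CompleteSpace W]
    [NormedAddCommGroup V] [InnerProductSpace ℝ V] [CompleteSpace V]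
    [Nontrivial W] [Nontrivial V]
    (B : W →L[ℝ] V →L[ℝ] ℝ) (c_B : ℝ) (hc : 0 < c_B)
    (hBNB1 : ∀ w : W, c_B * ‖w‖ ≤ ⨆ v : {v : V // v ≠ 0}, B w v / ‖(v : V)‖)
    (hBNB2 : ∀ v : V, v ≠ 0 → ∃ w : W, 0 < B w v) :
    (⨅ w : {w : W // w ≠ 0}, ⨆ v : {v : V // v ≠ 0},
        B w v / (‖(w : W)‖ * ‖(v : V)‖)) =
      (⨅ v : {v : V // v ≠ 0}, ⨆ w : {w : W // w ≠ 0},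
        B w v / (‖(w : W)‖ * ‖(v : V)‖)) := by
  set T := B.bilinRepr
  have hTB (w : W) (v : V) : ⟪T w, v⟫ = B w v := B.inner_bilinRepr_apply w v
  have hT (w : W) : c_B * ‖w‖ ≤ ‖T w‖ := by
    have h := iSup_inner_div_mul_norm (T w) zero_le_one
    simp only [one_mul, div_one, hTB] at h
    exact (hBNB1 w).trans_eq h
  have hdense (v : V) (hv : v ≠ 0) : ∃ w, ⟪T w, v⟫ ≠ 0 := by
    obtain ⟨w, hw⟩ := hBNB2 v hv
    exact ⟨w, hTB w v ▸ hw.ne'⟩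
  obtain ⟨S, hST, hTS⟩ := T.exists_inverse_of_bounded_below hc hT hdense
  have hL (w : {w : W // w ≠ 0}) : ⨆ v : {v : V // v ≠ 0},
      B w v / (‖(w : W)‖ * ‖(v : V)‖) = ‖T w‖ / ‖(w : W)‖ := by
    simpa only [hTB] using iSup_inner_div_mul_norm (T w) (norm_nonneg (w : W))
  have hR (v : {v : V // v ≠ 0}) : ⨆ w : {w : W // w ≠ 0},
      B w v / (‖(w : W)‖ * ‖(v : V)‖) = ‖adjoint T v‖ / ‖(v : V)‖ := by
    rw [← iSup_inner_div_mul_norm (adjoint T v) (norm_nonneg (v : V))]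
    refine iSup_congr fun w => ?_
    rw [adjoint_inner_left, real_inner_comm, hTB, mul_comm]
  rw [iInf_congr hL, iInf_congr hR, iInf_norm_apply_div_norm_eq_inv_norm hST hTS,
    iInf_norm_apply_div_norm_eq_inv_norm (S := adjoint S)
      (by rw [← adjoint_comp, hTS, adjoint_id]) (by rw [← adjoint_comp, hST, adjoint_id]),
    LinearIsometryEquiv.norm_map]
end

section
/- Assume the bounded bilinear form ℬ satisfies condition (BNB1) with constant c_B > 0 and condition (BNB2). Then for every continuous linear functional F ∈ V* there exists a unique w ∈ W such that ℬ(w,v) = F(v) for all v ∈ V, and this solution satisfies ‖w‖_W ≤ c_B⁻¹ ‖F‖_{V*}. -/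
/-!
Read `ℬ` as an operator `W → V*`. Since `ℬ w (v / ‖v‖) ≤ ‖ℬ w‖`, (BNB1) says this operator is
bounded below by `c_B`: it is injective with closed range, and a solution obeys
`c_B ‖w‖ ≤ ‖ℬ w‖ = ‖F‖`. Transported to `V` by the Riesz isometry `V* ≅ V`, the range is a closed
subspace whose orthogonal complement is trivial by (BNB2), so the operator is onto.
-/

open InnerProductSpace NNReal

theorem ContinuousLinearMap.iSup_div_norm_le_opNorm {V : Type*} [NormedAddCommGroup V]
    [NormedSpace ℝ V] (f : StrongDual ℝ V) :
    ⨆ v : {v : V // v ≠ 0}, f v / ‖(v : V)‖ ≤ ‖f‖ := by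
  refine Real.iSup_le (fun v => ?_) (norm_nonneg f)
  rw [div_le_iff₀ (norm_pos_iff.mpr v.2)]
  exact (le_abs_self _).trans (f.le_opNorm v)

theorem ContinuousLinearMap.surjective_of_antilipschitz_of_inner_ne_zero {𝕜 W V : Type*}
    [RCLike 𝕜] [NormedAddCommGroup W] [NormedSpace 𝕜 W] [CompleteSpace W]
    [NormedAddCommGroup V] [InnerProductSpace 𝕜 V]
    (T : W →L[𝕜] V) {K : ℝ≥0} (hT : AntilipschitzWith K T)
    (hsep : ∀ v : V, v ≠ 0 → ∃ w : W, inner 𝕜 (T w) v ≠ 0) :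
    Function.Surjective T := by
  have hcomplete : IsComplete (LinearMap.range (T : W →ₗ[𝕜] V) : Set V) := by
    rw [LinearMap.coe_range]
    exact hT.isComplete_range T.uniformContinuous
  have := hcomplete.completeSpace_coe
  refine LinearMap.range_eq_top.mp ?_
  rw [← Submodule.orthogonal_eq_bot_iff, Submodule.eq_bot_iff]
  intro v hv
  by_contra hv0
  obtain ⟨w, hw⟩ := hsep v hv0
  exact hw (hv (T w) ⟨w, rfl⟩)

theorem ContinuousLinearMap.surjective_of_antilipschitz_of_apply_ne_zero {W V : Type*}
    [NormedAddCommGroup W] [NormedSpace ℝ W] [CompleteSpace W]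
    [NormedAddCommGroup V] [InnerProductSpace ℝ V] [CompleteSpace V]
    (B : W →L[ℝ] StrongDual ℝ V) {K : ℝ≥0} (hB : AntilipschitzWith K B)
    (hsep : ∀ v : V, v ≠ 0 → ∃ w : W, B w v ≠ 0) :
    Function.Surjective B := by
  let riesz : StrongDual ℝ V →L[ℝ] V := (toDual ℝ V).symm.toLinearIsometry.toContinuousLinearMap
  have hT : Function.Surjective (riesz.comp B) :=
    (riesz.comp B).surjective_of_antilipschitz_of_inner_ne_zero
      ((toDual ℝ V).symm.isometry.antilipschitz.comp hB)
      fun v hv => (hsep v hv).imp fun w hw => by rwa [← toDual_symm_apply] at hw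
  exact fun F => (hT (riesz F)).imp fun w hw => (toDual ℝ V).symm.injective hw

/-- **Well-posedness of the variational problem.**
If the bounded bilinear form `ℬ : W × V → ℝ` satisfies (BNB1) with constant `c_B > 0`
and (BNB2), then for every `F ∈ V*` there is a unique `w ∈ W` with `ℬ(w, v) = F(v)` for
all `v ∈ V`, and it satisfies `‖w‖_W ≤ c_B⁻¹ ‖F‖_{V*}`. -/
theorem variational_wellposed
    {W V : Type*} [NormedAddCommGroup W] [InnerProductSpace ℝ W] [CompleteSpace W]
    [NormedAddCommGroup V] [InnerProductSpace ℝ V] [CompleteSpace V]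
    (B : W →L[ℝ] V →L[ℝ] ℝ) (c_B : ℝ) (hc : 0 < c_B)
    (hBNB1 : ∀ w : W, c_B * ‖w‖ ≤ ⨆ v : {v : V // v ≠ 0}, B w v / ‖(v : V)‖)
    (hBNB2 : ∀ v : V, v ≠ 0 → ∃ w : W, 0 < B w v)
    (F : V →L[ℝ] ℝ) :
    ∃ w : W, (∀ v : V, B w v = F v) ∧ ‖w‖ ≤ c_B⁻¹ * ‖F‖ ∧
      (∀ w' : W, (∀ v : V, B w' v = F v) → w' = w) := by
  have hbound (w : W) : c_B * ‖w‖ ≤ ‖B w‖ := (hBNB1 w).trans (B w).iSup_div_norm_le_opNorm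
  have hanti : AntilipschitzWith c_B⁻¹.toNNReal B := B.antilipschitz_of_bound fun w => by
    rw [Real.coe_toNNReal _ (inv_nonneg.mpr hc.le), le_inv_mul_iff₀ hc]
    exact hbound w
  obtain ⟨w, rfl⟩ := B.surjective_of_antilipschitz_of_apply_ne_zero hanti
    (fun v hv => (hBNB2 v hv).imp fun _ hw => hw.ne') F
  refine ⟨w, fun v => rfl, (le_inv_mul_iff₀ hc).mpr (hbound w), ?_⟩
  exact fun w' hw' => hanti.injective (ContinuousLinearMap.ext hw')
end

section
/- Assume the bounded bilinear form ℬ satisfies condition (BNB1) with constant c_B > 0 and condition (BNB2). Then for every continuous linear functional G ∈ W* the adjoint variational problem is well-posed: there exists a unique v ∈ V such that ℬ(w,v) = G(w) for all w ∈ W, and this solution satisfies ‖v‖_V ≤ c_B⁻¹ ‖G‖_{W*}. -/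
/-!
Represent `ℬ` by the operator `A : W → V` with `⟪A w, v⟫ = ℬ(w, v)` (Riesz). Since the supremum
in (BNB1) is at most `‖A w‖`, (BNB1) makes `A` bounded below by `c_B`, hence injective with closed
range, and (BNB2) says that this range has trivial orthogonal complement. So `A` is an isomorphism
with `‖A⁻¹‖ ≤ c_B⁻¹`, and the solution is the Riesz representative of `G ∘ A⁻¹`.
-/

open InnerProductSpace

section BNB

variable {W V : Type*} [NormedAddCommGroup W] [NormedSpace ℝ W]
  [NormedAddCommGroup V] [InnerProductSpace ℝ V]

theorem eq_of_forall_apply_eq_of_forall_exists_pos (B : W →L[ℝ] V →L[ℝ] ℝ)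
    (hB : ∀ v : V, v ≠ 0 → ∃ w : W, 0 < B w v) {v₁ v₂ : V} (h : ∀ w : W, B w v₁ = B w v₂) :
    v₁ = v₂ := by
  by_contra hne
  obtain ⟨w, hw⟩ := hB (v₁ - v₂) (sub_ne_zero.mpr hne)
  rw [map_sub, h w, sub_self] at hw
  exact hw.false

theorem ContinuousLinearMap.range_eq_top_of_antilipschitz_s4 [CompleteSpace W] [CompleteSpace V]
    (T : W →L[ℝ] V) {K : NNReal} (hT : AntilipschitzWith K T)
    (h : ∀ v : V, (∀ w : W, ⟪T w, v⟫_ℝ = 0) → v = 0) :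
    LinearMap.range (T : W →ₗ[ℝ] V) = ⊤ := by
  have hclosed : IsClosed (LinearMap.range (T : W →ₗ[ℝ] V) : Set V) :=
    hT.isClosed_range T.uniformContinuous
  rw [← hclosed.submodule_topologicalClosure_eq, Submodule.topologicalClosure_eq_top_iff,
    Submodule.eq_bot_iff]
  exact fun v hv => h v fun w => (Submodule.mem_orthogonal _ v).mp hv (T w) ⟨w, rfl⟩

variable [CompleteSpace V]

/-- Two-space analogue of `InnerProductSpace.continuousLinearMapOfBilin`. -/
noncomputable def rieszOfBilin (B : W →L[ℝ] V →L[ℝ] ℝ) : W →L[ℝ] V :=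
  (toDual ℝ V).symm.toContinuousLinearEquiv.toContinuousLinearMap.comp B

theorem inner_rieszOfBilin_apply (B : W →L[ℝ] V →L[ℝ] ℝ) (w : W) (v : V) :
    ⟪rieszOfBilin B w, v⟫_ℝ = B w v :=
  toDual_symm_apply

theorem iSup_div_norm_le_norm_rieszOfBilin (B : W →L[ℝ] V →L[ℝ] ℝ) (w : W) :
    ⨆ v : {v : V // v ≠ 0}, B w v / ‖(v : V)‖ ≤ ‖rieszOfBilin B w‖ := by
  refine Real.iSup_le (fun v => ?_) (norm_nonneg _)
  rw [div_le_iff₀ (norm_pos_iff.mpr v.2), ← inner_rieszOfBilin_apply]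
  exact real_inner_le_norm _ _

theorem norm_le_inv_mul_norm_rieszOfBilin (B : W →L[ℝ] V →L[ℝ] ℝ) {c : ℝ} (hc : 0 < c)
    (hB : ∀ w : W, c * ‖w‖ ≤ ⨆ v : {v : V // v ≠ 0}, B w v / ‖(v : V)‖) (w : W) :
    ‖w‖ ≤ c⁻¹ * ‖rieszOfBilin B w‖ := by
  rw [inv_mul_eq_div, le_div_iff₀' hc]
  exact (hB w).trans (iSup_div_norm_le_norm_rieszOfBilin B w)

theorem exists_continuousLinearEquiv_rieszOfBilin [CompleteSpace W] (B : W →L[ℝ] V →L[ℝ] ℝ)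
    {c : ℝ} (hc : 0 < c)
    (hB₁ : ∀ w : W, c * ‖w‖ ≤ ⨆ v : {v : V // v ≠ 0}, B w v / ‖(v : V)‖)
    (hB₂ : ∀ v : V, v ≠ 0 → ∃ w : W, 0 < B w v) :
    ∃ E : W ≃L[ℝ] V, (E : W →L[ℝ] V) = rieszOfBilin B ∧ ‖(E.symm : V →L[ℝ] W)‖ ≤ c⁻¹ := by
  set A := rieszOfBilin B
  have hbound := norm_le_inv_mul_norm_rieszOfBilin B hc hB₁
  have hanti : AntilipschitzWith ⟨c⁻¹, (inv_pos.mpr hc).le⟩ A := A.antilipschitz_of_bound hbound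
  have hker : LinearMap.ker (A : W →ₗ[ℝ] V) = ⊥ :=
    LinearMap.ker_eq_bot_of_injective hanti.injective
  have hrange : LinearMap.range (A : W →ₗ[ℝ] V) = ⊤ := by
    refine A.range_eq_top_of_antilipschitz_s4 hanti fun v hv => ?_
    by_contra hv0
    obtain ⟨w, hw⟩ := hB₂ v hv0
    rw [← inner_rieszOfBilin_apply, hv w] at hw
    exact hw.false
  set E := ContinuousLinearEquiv.ofBijective A hker hrange
  refine ⟨E, rfl, ContinuousLinearMap.opNorm_le_bound _ (inv_pos.mpr hc).le fun v => ?_⟩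
  calc ‖E.symm v‖ ≤ c⁻¹ * ‖A (E.symm v)‖ := hbound _
    _ = c⁻¹ * ‖v‖ := congrArg (c⁻¹ * ‖·‖) (E.apply_symm_apply v)

end BNB

/-- **Well-posedness of the adjoint variational problem.**
If the bounded bilinear form `ℬ : W × V → ℝ` satisfies (BNB1) with constant `c_B > 0`
and (BNB2), then for every `G ∈ W*` there is a unique `v ∈ V` with `ℬ(w, v) = G(w)` for
all `w ∈ W`, and it satisfies `‖v‖_V ≤ c_B⁻¹ ‖G‖_{W*}`. -/
theorem adjoint_variational_wellposed
    {W V : Type*} [NormedAddCommGroup W] [InnerProductSpace ℝ W] [CompleteSpace W]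
    [NormedAddCommGroup V] [InnerProductSpace ℝ V] [CompleteSpace V]
    (B : W →L[ℝ] V →L[ℝ] ℝ) (c_B : ℝ) (hc : 0 < c_B)
    (hBNB1 : ∀ w : W, c_B * ‖w‖ ≤ ⨆ v : {v : V // v ≠ 0}, B w v / ‖(v : V)‖)
    (hBNB2 : ∀ v : V, v ≠ 0 → ∃ w : W, 0 < B w v)
    (G : W →L[ℝ] ℝ) :
    ∃ v : V, (∀ w : W, B w v = G w) ∧ ‖v‖ ≤ c_B⁻¹ * ‖G‖ ∧
      (∀ v' : V, (∀ w : W, B w v' = G w) → v' = v) := by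
  obtain ⟨E, hEA, hEsymm⟩ := exists_continuousLinearEquiv_rieszOfBilin B hc hBNB1 hBNB2
  set v := (toDual ℝ V).symm (G.comp (E.symm : V →L[ℝ] W))
  have hsol : ∀ w : W, B w v = G w := fun w => by
    rw [← inner_rieszOfBilin_apply, ← hEA, real_inner_comm, toDual_symm_apply]
    exact congrArg G (E.symm_apply_apply w)
  refine ⟨v, hsol, ?_, fun v' hv' => ?_⟩
  · calc ‖v‖ = ‖G.comp (E.symm : V →L[ℝ] W)‖ := LinearIsometryEquiv.norm_map _ _
      _ ≤ ‖G‖ * c_B⁻¹ :=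
        (G.opNorm_comp_le _).trans (mul_le_mul_of_nonneg_left hEsymm (norm_nonneg G))
      _ = c_B⁻¹ * ‖G‖ := mul_comm _ _
  · exact eq_of_forall_apply_eq_of_forall_exists_pos B hBNB2 fun w => (hv' w).trans (hsol w).symm
end

section
/- Let E be a real Hilbert space and let P : E → E be a continuous linear idempotent operator (P ∘ P = P) with P ≠ 0 and P ≠ id. Then the operator norms of P and of its complementary projection coincide: ‖id − P‖ = ‖P‖. -/
/-!
For `x = a + b` with `a = P x` and `b = x - P x ∈ ker P`, the map `P` fixes `a + t • b` for every
real `t`, so `‖P‖ ≥ ‖a‖ / dist(a, ℝ b) = 1 / sin θ`, where `θ` is the angle between `a` and `b`.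
On the other hand `‖x‖ = ‖a + b‖ ≥ ‖b‖ sin θ`, hence `‖(1 - P) x‖ = ‖b‖ ≤ ‖P‖ ‖x‖`.
Exchanging the roles of `P` and the idempotent `1 - P` gives the reverse inequality.
-/

open scoped RealInnerProductSpace

theorem IsIdempotentElem.one_le_norm {R : Type*} [NormedRing R] {p : R}
    (hp : IsIdempotentElem p) (hp0 : p ≠ 0) : 1 ≤ ‖p‖ := by
  have h : ‖p * p‖ ≤ ‖p‖ * ‖p‖ := norm_mul_le p p
  rw [hp.eq] at h
  exact (le_mul_iff_one_le_right (norm_pos_iff.2 hp0)).1 h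

section
variable {E : Type*} [NormedAddCommGroup E] [InnerProductSpace ℝ E]

theorem norm_add_smul_sq_real (a b : E) (t : ℝ) :
    ‖a + t • b‖ ^ 2 = ‖a‖ ^ 2 + 2 * t * ⟪a, b⟫ + t ^ 2 * ‖b‖ ^ 2 := by
  rw [norm_add_sq_real, real_inner_smul_right, norm_smul, Real.norm_eq_abs, mul_pow, sq_abs]
  ring

theorem norm_le_mul_norm_add_of_forall_norm_le_mul_norm_add_smul {a b : E} {K : ℝ}
    (hK : 1 ≤ K) (h : ∀ t : ℝ, ‖a‖ ≤ K * ‖a + t • b‖) : ‖b‖ ≤ K * ‖a + b‖ := by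
  rcases eq_or_ne a 0 with rfl | ha
  · simpa using le_mul_of_one_le_left (norm_nonneg b) hK
  have hsq : ∀ t : ℝ, ‖a‖ ^ 2 ≤ K ^ 2 * (‖a‖ ^ 2 + 2 * t * ⟪a, b⟫ + t ^ 2 * ‖b‖ ^ 2) := by
    intro t
    rw [← norm_add_smul_sq_real, ← mul_pow]
    exact pow_le_pow_left₀ (norm_nonneg a) (h t) 2
  set t₀ := -⟪a, b⟫ / ‖b‖ ^ 2
  have ht₀ : t₀ * ‖b‖ ^ 2 = -⟪a, b⟫ := by
    rcases eq_or_ne b 0 with rfl | hb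
    · simp
    · exact div_mul_cancel₀ _ (by positivity)
  -- `t₀` minimises `‖a + t • b‖`; the goal then follows from this and `(‖a‖ ^ 2 + ⟪a, b⟫) ^ 2 ≥ 0`.
  have gram : ‖a‖ ^ 2 * ‖b‖ ^ 2 ≤ K ^ 2 * (‖a‖ ^ 2 * ‖b‖ ^ 2 - ⟪a, b⟫ ^ 2) := by
    have h₀ := mul_le_mul_of_nonneg_right (hsq t₀) (sq_nonneg ‖b‖)
    have e : K ^ 2 * (‖a‖ ^ 2 + 2 * t₀ * ⟪a, b⟫ + t₀ ^ 2 * ‖b‖ ^ 2) * ‖b‖ ^ 2 =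
        K ^ 2 * (‖a‖ ^ 2 * ‖b‖ ^ 2 + 2 * (t₀ * ‖b‖ ^ 2) * ⟪a, b⟫ + (t₀ * ‖b‖ ^ 2) ^ 2) := by ring
    rw [e, ht₀] at h₀
    linarith
  have hpos : 0 < ‖a‖ ^ 2 := by positivity
  rw [← pow_le_pow_iff_left₀ (norm_nonneg b) (by positivity) two_ne_zero, mul_pow,
    norm_add_sq_real]
  nlinarith [mul_nonneg (sq_nonneg K) (sq_nonneg (‖a‖ ^ 2 + ⟪a, b⟫))]

theorem ContinuousLinearMap.norm_one_sub_le_of_isIdempotentElem {P : E →L[ℝ] E}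
    (hP : IsIdempotentElem P) (hP0 : P ≠ 0) : ‖1 - P‖ ≤ ‖P‖ := by
  refine opNorm_le_bound _ (norm_nonneg P) fun x => ?_
  have hPP : P (P x) = P x := DFunLike.congr_fun hP.eq x
  have hline : ∀ t : ℝ, ‖P x‖ ≤ ‖P‖ * ‖P x + t • (x - P x)‖ := fun t => by
    simpa [hPP] using P.le_opNorm (P x + t • (x - P x))
  simpa using norm_le_mul_norm_add_of_forall_norm_le_mul_norm_add_smul (hP.one_le_norm hP0) hline

end

theorem norm_id_sub_projection_general
    {E : Type*} [NormedAddCommGroup E] [InnerProductSpace ℝ E]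
    (P : E →L[ℝ] E) (hidem : P ∘L P = P)
    (hP0 : P ≠ 0) (hPid : P ≠ ContinuousLinearMap.id ℝ E) :
    ‖ContinuousLinearMap.id ℝ E - P‖ = ‖P‖ := by
  have hP : IsIdempotentElem P := hidem
  have hQ0 : 1 - P ≠ 0 := sub_ne_zero.2 hPid.symm
  rw [← ContinuousLinearMap.one_def]
  refine le_antisymm (ContinuousLinearMap.norm_one_sub_le_of_isIdempotentElem hP hP0) ?_
  simpa using ContinuousLinearMap.norm_one_sub_le_of_isIdempotentElem hP.one_sub hQ0

/-- **Norm of a complementary projection (Kato's lemma).**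
If `P` is a continuous linear idempotent on a real Hilbert space `E` with `P ≠ 0` and
`P ≠ id`, then `‖id − P‖ = ‖P‖`. -/
theorem norm_id_sub_projection
    {E : Type*} [NormedAddCommGroup E] [InnerProductSpace ℝ E] [CompleteSpace E]
    (P : E →L[ℝ] E) (hidem : P ∘L P = P)
    (hP0 : P ≠ 0) (hPid : P ≠ ContinuousLinearMap.id ℝ E) :
    ‖ContinuousLinearMap.id ℝ E - P‖ = ‖P‖ :=
  norm_id_sub_projection_general P hidem hP0 hPid
end

section
/- Let E be a real Hilbert space and let P : E → E be a continuous linear idempotent operator (P ∘ P = P) with P ≠ 0, and let Y_h := range(P). Then for every u ∈ E one has the quasi-optimality estimate ‖u − P u‖ ≤ ‖P‖ · inf_{y ∈ Y_h} ‖u − y‖. -/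
/-!
Kato's argument. Write `x = v + w` with `v = P x` and `w = x - P x`. Since `P (v + t • w) = v`,
`‖v‖ ≤ ‖P‖ * ‖v + t • w‖` for every `t`; minimising over `t` bounds `‖v‖² ‖w‖²` by `‖P‖²` times
the Gram determinant `‖v‖² ‖w‖² - ⟪v, w⟫²`, which in turn is at most `‖v‖² ‖v + w‖²`. Hence
`‖x - P x‖ ≤ ‖P‖ * ‖x‖`, and applying this to `u - y` with `y = P z ∈ range P` gives the estimate.
-/

open scoped RealInnerProductSpace

lemma IsIdempotentElem.one_le_norm_s6 {R : Type*} [NonUnitalNormedRing R] {e : R}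
    (he : IsIdempotentElem e) (he0 : e ≠ 0) : 1 ≤ ‖e‖ := by
  have hpos : 0 < ‖e‖ := norm_pos_iff.mpr he0
  have : ‖e‖ ≤ ‖e‖ * ‖e‖ := by simpa only [he.eq] using norm_mul_le e e
  nlinarith

section Gram

variable {F : Type*} [NormedAddCommGroup F] [InnerProductSpace ℝ F]

lemma norm_sq_mul_norm_add_smul_sq (a b : F) (t : ℝ) :
    ‖a‖ ^ 2 * ‖b + t • a‖ ^ 2
      = ‖a‖ ^ 2 * ‖b‖ ^ 2 - ⟪a, b⟫ ^ 2 + (t * ‖a‖ ^ 2 + ⟪a, b⟫) ^ 2 := by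
  rw [norm_add_sq_real, real_inner_smul_right, norm_smul, Real.norm_eq_abs, mul_pow, sq_abs,
    real_inner_comm]
  ring

lemma gram_le_norm_sq_mul_norm_add_smul_sq (a b : F) (t : ℝ) :
    ‖a‖ ^ 2 * ‖b‖ ^ 2 - ⟪a, b⟫ ^ 2 ≤ ‖a‖ ^ 2 * ‖b + t • a‖ ^ 2 := by
  rw [norm_sq_mul_norm_add_smul_sq]
  exact le_add_of_nonneg_right (sq_nonneg _)

lemma exists_norm_sq_mul_norm_add_smul_sq_eq_gram (a b : F) :
    ∃ t : ℝ, ‖a‖ ^ 2 * ‖b + t • a‖ ^ 2 = ‖a‖ ^ 2 * ‖b‖ ^ 2 - ⟪a, b⟫ ^ 2 := by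
  refine ⟨-(⟪a, b⟫ / ‖a‖ ^ 2), ?_⟩
  rw [norm_sq_mul_norm_add_smul_sq, add_eq_left, sq_eq_zero_iff]
  rcases eq_or_ne a 0 with rfl | ha
  · simp
  · field_simp
    ring

end Gram

section Idempotent

variable {E : Type*} [NormedAddCommGroup E] [InnerProductSpace ℝ E]

lemma IsIdempotentElem.norm_sub_apply_sq_mul_le {P : E →L[ℝ] E} (hP : IsIdempotentElem P)
    (x : E) : ‖x - P x‖ ^ 2 * ‖P x‖ ^ 2 ≤ ‖P‖ ^ 2 * ‖x‖ ^ 2 * ‖P x‖ ^ 2 := by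
  set v := P x
  set w := x - P x
  have hPPx : P v = v := congr($hP.eq x)
  have hPw : P w = 0 := by rw [map_sub, hPPx, sub_self]
  have hx : x = w + (1 : ℝ) • v := by rw [one_smul, sub_add_cancel]
  have hv_le (t : ℝ) : ‖v‖ ^ 2 ≤ ‖P‖ ^ 2 * ‖v + t • w‖ ^ 2 := by
    rw [← mul_pow]
    gcongr
    simpa only [map_add, map_smul, hPPx, hPw, smul_zero, add_zero] using P.le_opNorm (v + t • w)
  obtain ⟨t, ht⟩ := exists_norm_sq_mul_norm_add_smul_sq_eq_gram w v
  calc ‖w‖ ^ 2 * ‖v‖ ^ 2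
      ≤ ‖P‖ ^ 2 * (‖w‖ ^ 2 * ‖v + t • w‖ ^ 2) := by nlinarith [hv_le t, sq_nonneg ‖w‖]
    _ = ‖P‖ ^ 2 * (‖v‖ ^ 2 * ‖w‖ ^ 2 - ⟪v, w⟫ ^ 2) := by rw [ht, real_inner_comm]; ring
    _ ≤ ‖P‖ ^ 2 * (‖v‖ ^ 2 * ‖x‖ ^ 2) := by
      rw [hx]
      gcongr
      exact gram_le_norm_sq_mul_norm_add_smul_sq v w 1
    _ = ‖P‖ ^ 2 * ‖x‖ ^ 2 * ‖v‖ ^ 2 := by ring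

theorem IsIdempotentElem.norm_sub_apply_le {P : E →L[ℝ] E} (hP : IsIdempotentElem P)
    (hP0 : P ≠ 0) (x : E) : ‖x - P x‖ ≤ ‖P‖ * ‖x‖ := by
  rcases eq_or_ne (P x) 0 with hPx | hPx
  · rw [hPx, sub_zero]
    exact le_mul_of_one_le_left (norm_nonneg x) (hP.one_le_norm_s6 hP0)
  · rw [← sq_le_sq₀ (norm_nonneg _) (by positivity), mul_pow]
    exact le_of_mul_le_mul_right (hP.norm_sub_apply_sq_mul_le x) (by positivity)

lemma IsIdempotentElem.norm_sub_apply_le_mul_norm_sub {P : E →L[ℝ] E}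
    (hP : IsIdempotentElem P) (hP0 : P ≠ 0) (u : E) {y : E}
    (hy : y ∈ LinearMap.range (P : E →ₗ[ℝ] E)) : ‖u - P u‖ ≤ ‖P‖ * ‖u - y‖ := by
  obtain ⟨z, rfl⟩ := hy
  have hPPz : P (P z) = P z := congr($hP.eq z)
  simpa only [map_sub, ContinuousLinearMap.coe_coe, hPPz, sub_sub_sub_cancel_right]
    using hP.norm_sub_apply_le hP0 (u - P z)

end Idempotent

theorem projection_quasi_optimality_general
    {E : Type*} [NormedAddCommGroup E] [InnerProductSpace ℝ E]
    (P : E →L[ℝ] E) (hidem : P ∘L P = P) (hP0 : P ≠ 0)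
    (u : E) :
    ‖u - P u‖ ≤ ‖P‖ * ⨅ y : LinearMap.range (P : E →ₗ[ℝ] E), ‖u - (y : E)‖ := by
  have : Nonempty (LinearMap.range (P : E →ₗ[ℝ] E)) := ⟨0⟩
  rw [Real.mul_iInf_of_nonneg (norm_nonneg P)]
  exact le_ciInf fun y ↦ IsIdempotentElem.norm_sub_apply_le_mul_norm_sub hidem hP0 u y.2

/-- **Quasi-optimality of an idempotent operator.**
If `P` is a continuous linear idempotent on a real Hilbert space `E` with `P ≠ 0`, and
`Y_h := range P`, then for every `u ∈ E` one has
`‖u − P u‖ ≤ ‖P‖ · inf_{y ∈ Y_h} ‖u − y‖`. -/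
theorem projection_quasi_optimality
    {E : Type*} [NormedAddCommGroup E] [InnerProductSpace ℝ E] [CompleteSpace E]
    (P : E →L[ℝ] E) (hidem : P ∘L P = P) (hP0 : P ≠ 0)
    (u : E) :
    ‖u - P u‖ ≤ ‖P‖ * ⨅ y : LinearMap.range (P : E →ₗ[ℝ] E), ‖u - (y : E)‖ :=
  projection_quasi_optimality_general P hidem hP0 u
end

section
/- Let Y and X be real Hilbert spaces, let Y_h ⊆ Y and X_h ⊆ X be finite-dimensional subspaces with dim Y_h = dim X_h and Y_h ≠ {0}, and let ℬ : Y × X → ℝ be a bilinear form such that |ℬ(y, x_h)| ≤ C ‖y‖_Y ‖x_h‖_X for all y ∈ Y and x_h ∈ X_h, and such that the discrete inf-sup condition holds with constant c > 0: for every y_h ∈ Y_h, sup_{0≠x_h∈X_h} ℬ(y_h, x_h)/‖x_h‖_X ≥ c ‖y_h‖_Y. Then for every u ∈ Y there exists a unique Petrov–Galerkin approximation U ∈ Y_h satisfying ℬ(U, x_h) = ℬ(u, x_h) for all x_h ∈ X_h, and it satisfies the quasi-optimal error bound ‖u − U‖_Y ≤ (C/c) · inf_{y_h ∈ Y_h}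 ‖u − y_h‖_Y. -/
/-!
The inf-sup condition makes `y ↦ B y ·` injective from `Yh` to the dual of `Xh`, hence bijective
by the dimension count, so the Petrov–Galerkin projection `P` onto `Yh` is a well-defined
idempotent with `‖P z‖ ≤ (C/c) ‖z‖`. Since `P` fixes `Yh`, `u - P u = (1 - P)(u - y)` for every
`y ∈ Yh`, and on a Hilbert space `‖1 - P‖ ≤ ‖P‖` for every idempotent `P ≠ 0` (Kato,
Xu–Zikatanov), which yields the constant `C/c` rather than `1 + C/c`.
-/

open Module

section Galerkin

variable {K V W : Type*} [Field K] [AddCommGroup V] [Module K V] [AddCommGroup W] [Module K W]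
  {Vh : Submodule K V} {Wh : Submodule K W} (B : V →ₗ[K] W →ₗ[K] K)

theorem injective_domRestrict_compl₂_subtype (hB : ∀ v ∈ Vh, (∀ w ∈ Wh, B v w = 0) → v = 0) :
    Function.Injective ((B.domRestrict Vh).compl₂ Wh.subtype) := by
  rw [← LinearMap.ker_eq_bot, LinearMap.ker_eq_bot']
  intro v hv
  exact Subtype.ext <| hB v v.2 fun w hw => LinearMap.congr_fun hv ⟨w, hw⟩

variable [FiniteDimensional K Vh] [FiniteDimensional K Wh]

noncomputable def galerkinEquiv (hdim : finrank K Vh = finrank K Wh)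
    (hB : ∀ v ∈ Vh, (∀ w ∈ Wh, B v w = 0) → v = 0) : Vh ≃ₗ[K] Dual K Wh :=
  ((B.domRestrict Vh).compl₂ Wh.subtype).linearEquivOfInjective
    (injective_domRestrict_compl₂_subtype B hB) (by rw [hdim, Subspace.dual_finrank_eq])

noncomputable def galerkinProjection (hdim : finrank K Vh = finrank K Wh)
    (hB : ∀ v ∈ Vh, (∀ w ∈ Wh, B v w = 0) → v = 0) : V →ₗ[K] V :=
  Vh.subtype ∘ₗ (galerkinEquiv B hdim hB).symm.toLinearMap ∘ₗ B.compl₂ Wh.subtype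

variable (hdim : finrank K Vh = finrank K Wh) (hB : ∀ v ∈ Vh, (∀ w ∈ Wh, B v w = 0) → v = 0)

theorem galerkinProjection_mem (v : V) : galerkinProjection B hdim hB v ∈ Vh :=
  Submodule.coe_mem _

theorem galerkinProjection_apply_apply (v : V) (w : W) (hw : w ∈ Wh) :
    B (galerkinProjection B hdim hB v) w = B v w :=
  LinearMap.congr_fun ((galerkinEquiv B hdim hB).apply_symm_apply (B.compl₂ Wh.subtype v)) ⟨w, hw⟩

theorem eq_galerkinProjection {v v' : V} (hv' : v' ∈ Vh) (h : ∀ w ∈ Wh, B v' w = B v w) :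
    v' = galerkinProjection B hdim hB v :=
  sub_eq_zero.mp <| hB _ (Vh.sub_mem hv' (galerkinProjection_mem B hdim hB v)) fun w hw => by
    rw [map_sub, LinearMap.sub_apply, h w hw, galerkinProjection_apply_apply B hdim hB v w hw,
      sub_self]

theorem galerkinProjection_eq_self {v : V} (hv : v ∈ Vh) : galerkinProjection B hdim hB v = v :=
  (eq_galerkinProjection B hdim hB hv fun _ _ => rfl).symm

theorem isIdempotentElem_galerkinProjection : IsIdempotentElem (galerkinProjection B hdim hB) :=
  LinearMap.ext fun v => galerkinProjection_eq_self B hdim hB (galerkinProjection_mem B hdim hB v)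

end Galerkin

section Kato

variable {E : Type*} [NormedAddCommGroup E] [InnerProductSpace ℝ E]

theorem norm_div_smul_add_div_smul {a b : E} (ha : a ≠ 0) (hb : b ≠ 0) :
    ‖(‖b‖ / ‖a‖) • a + (‖a‖ / ‖b‖) • b‖ = ‖a + b‖ := by
  have ha' : ‖a‖ ≠ 0 := norm_ne_zero_iff.mpr ha
  have hb' : ‖b‖ ≠ 0 := norm_ne_zero_iff.mpr hb
  rw [← sq_eq_sq₀ (norm_nonneg _) (norm_nonneg _), norm_add_sq_real, norm_add_sq_real,
    norm_smul, norm_smul, real_inner_smul_left, real_inner_smul_right]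
  simp only [Real.norm_eq_abs, abs_div, abs_norm]
  field_simp
  ring

theorem norm_le_mul_norm_add_of_apply_eq_self_of_apply_eq_zero {P : E →ₗ[ℝ] E} {k : ℝ}
    (hk : 1 ≤ k) (hPk : ∀ x, ‖P x‖ ≤ k * ‖x‖) {a b : E} (hPa : P a = a) (hPb : P b = 0) :
    ‖b‖ ≤ k * ‖a + b‖ := by
  rcases eq_or_ne a 0 with rfl | ha
  · rw [zero_add]
    exact le_mul_of_one_le_left (norm_nonneg b) hk
  rcases eq_or_ne b 0 with rfl | hb
  · rw [norm_zero]
    exact mul_nonneg (by linarith) (norm_nonneg _)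
  -- `z = (‖b‖/‖a‖) a + (‖a‖/‖b‖) b` has the norm of `a + b`, while `P z` has the norm of `b`.
  have hPz : ‖P ((‖b‖ / ‖a‖) • a + (‖a‖ / ‖b‖) • b)‖ = ‖b‖ := by
    rw [map_add, map_smul, map_smul, hPa, hPb, smul_zero, add_zero, norm_smul, Real.norm_eq_abs,
      abs_div, abs_norm, abs_norm, div_mul_cancel₀ _ (norm_ne_zero_iff.mpr ha)]
  rw [← hPz, ← norm_div_smul_add_div_smul ha hb]
  exact hPk _

/-- Kato's identity `‖1 - P‖ = ‖P‖` for idempotents on a Hilbert space, in the form of a bound. -/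
theorem norm_sub_apply_le_of_isIdempotentElem {P : E →ₗ[ℝ] E} (hP : IsIdempotentElem P) {k : ℝ}
    (hk : 1 ≤ k) (hPk : ∀ x, ‖P x‖ ≤ k * ‖x‖) (x : E) : ‖x - P x‖ ≤ k * ‖x‖ := by
  have hPx : P (P x) = P x := LinearMap.congr_fun hP x
  have := norm_le_mul_norm_add_of_apply_eq_self_of_apply_eq_zero hk hPk hPx
    (by rw [map_sub, hPx, sub_self] : P (x - P x) = 0)
  rwa [add_sub_cancel] at this

theorem norm_sub_apply_le_of_apply_eq_self {P : E →ₗ[ℝ] E} (hP : IsIdempotentElem P) {k : ℝ}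
    (hk : 1 ≤ k) (hPk : ∀ x, ‖P x‖ ≤ k * ‖x‖) (x : E) {y : E} (hy : P y = y) :
    ‖x - P x‖ ≤ k * ‖x - y‖ := by
  have : x - P x = (x - y) - P (x - y) := by rw [map_sub, hy]; abel
  rw [this]
  exact norm_sub_apply_le_of_isIdempotentElem hP hk hPk _

end Kato

theorem mul_norm_le_of_infSup {Y X : Type*} [NormedAddCommGroup Y] [Module ℝ Y]
    [NormedAddCommGroup X] [Module ℝ X] {Xh : Submodule ℝ X} {B : Y →ₗ[ℝ] X →ₗ[ℝ] ℝ} {C c : ℝ}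
    [Nonempty {x : X // x ∈ Xh ∧ x ≠ 0}] {w z : Y}
    (hbdd : ∀ x ∈ Xh, |B z x| ≤ C * ‖z‖ * ‖x‖)
    (hinfsup : c * ‖w‖ ≤ ⨆ x : {x : X // x ∈ Xh ∧ x ≠ 0}, B w x / ‖(x : X)‖)
    (hwz : ∀ x ∈ Xh, B w x = B z x) : c * ‖w‖ ≤ C * ‖z‖ := by
  refine hinfsup.trans (ciSup_le fun ⟨x, hx, hx0⟩ => ?_)
  rw [hwz x hx, div_le_iff₀ (norm_pos_iff.mpr hx0)]
  exact (le_abs_self _).trans (hbdd x hx)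

theorem petrov_galerkin_quasi_optimality_general
    {Y X : Type*} [NormedAddCommGroup Y] [InnerProductSpace ℝ Y]
    [NormedAddCommGroup X] [InnerProductSpace ℝ X]
    (Yh : Submodule ℝ Y) (Xh : Submodule ℝ X)
    [FiniteDimensional ℝ Yh] [FiniteDimensional ℝ Xh]
    (hdim : Module.finrank ℝ Yh = Module.finrank ℝ Xh) (hYh : Yh ≠ ⊥)
    (B : Y →ₗ[ℝ] X →ₗ[ℝ] ℝ) (C c : ℝ) (hc : 0 < c)
    (hbdd : ∀ y : Y, ∀ x ∈ Xh, |B y x| ≤ C * ‖y‖ * ‖x‖)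
    (hinfsup : ∀ y ∈ Yh,
      c * ‖y‖ ≤ ⨆ x : {x : X // x ∈ Xh ∧ x ≠ 0}, B y x / ‖(x : X)‖)
    (u : Y) :
    ∃ U : Y, U ∈ Yh ∧ (∀ x ∈ Xh, B U x = B u x) ∧
      (∀ U' : Y, U' ∈ Yh → (∀ x ∈ Xh, B U' x = B u x) → U' = U) ∧
      ‖u - U‖ ≤ (C / c) * ⨅ y : Yh, ‖u - (y : Y)‖ := by
  obtain ⟨y₀, hy₀, hy₀_ne⟩ := Submodule.exists_mem_ne_zero_of_ne_bot hYh
  have hy₀_pos : 0 < ‖y₀‖ := norm_pos_iff.mpr hy₀_ne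
  have : Nonempty {x : X // x ∈ Xh ∧ x ≠ 0} := by
    by_contra h
    rw [not_nonempty_iff] at h
    have := hinfsup y₀ hy₀
    rw [Real.iSup_of_isEmpty] at this
    linarith [mul_pos hc hy₀_pos]
  have stable : ∀ w ∈ Yh, ∀ z, (∀ x ∈ Xh, B w x = B z x) → c * ‖w‖ ≤ C * ‖z‖ :=
    fun w hw z => mul_norm_le_of_infSup (hbdd z) (hinfsup w hw)
  have hB : ∀ w ∈ Yh, (∀ x ∈ Xh, B w x = 0) → w = 0 := fun w hw h => by
    have := stable w hw 0 (by simpa using h)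
    rw [norm_zero, mul_zero] at this
    exact norm_le_zero_iff.mp (nonpos_of_mul_nonpos_right this hc)
  have hk : 1 ≤ C / c := by
    rw [one_le_div hc]
    exact le_of_mul_le_mul_right (stable y₀ hy₀ y₀ fun _ _ => rfl) hy₀_pos
  set P := galerkinProjection B hdim hB
  have hP : ∀ z, ‖P z‖ ≤ C / c * ‖z‖ := fun z => by
    rw [div_mul_eq_mul_div, le_div_iff₀ hc, mul_comm]
    exact stable _ (galerkinProjection_mem B hdim hB z) z
      (galerkinProjection_apply_apply B hdim hB z)
  refine ⟨P u, galerkinProjection_mem B hdim hB u, galerkinProjection_apply_apply B hdim hB u,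
    fun U' hU' h => eq_galerkinProjection B hdim hB hU' h, ?_⟩
  rw [Real.mul_iInf_of_nonneg (by linarith)]
  exact le_ciInf fun y => norm_sub_apply_le_of_apply_eq_self
    (isIdempotentElem_galerkinProjection B hdim hB) hk hP u
    (galerkinProjection_eq_self B hdim hB y.2)

/-- **Quasi-optimality of the Petrov–Galerkin approximation.**
`Y`, `X` are real Hilbert spaces, `Y_h ⊆ Y`, `X_h ⊆ X` are finite-dimensional subspaces of
the same dimension with `Y_h ≠ {0}`, and `B : Y × X → ℝ` is a bilinear form which is bounded
on `Y × X_h` with constant `C` and satisfies the discrete inf-sup condition on `Y_h × X_h`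
with constant `c > 0`. Then for every `u ∈ Y` there is a unique Petrov–Galerkin approximation
`U ∈ Y_h` with `B(U, x_h) = B(u, x_h)` for all `x_h ∈ X_h`, and
`‖u − U‖ ≤ (C/c) · inf_{y_h ∈ Y_h} ‖u − y_h‖`. -/
theorem petrov_galerkin_quasi_optimality
    {Y X : Type*} [NormedAddCommGroup Y] [InnerProductSpace ℝ Y] [CompleteSpace Y]
    [NormedAddCommGroup X] [InnerProductSpace ℝ X] [CompleteSpace X]
    (Yh : Submodule ℝ Y) (Xh : Submodule ℝ X)
    [FiniteDimensional ℝ Yh] [FiniteDimensional ℝ Xh]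
    (hdim : Module.finrank ℝ Yh = Module.finrank ℝ Xh) (hYh : Yh ≠ ⊥)
    (B : Y →ₗ[ℝ] X →ₗ[ℝ] ℝ) (C c : ℝ) (hc : 0 < c)
    (hbdd : ∀ y : Y, ∀ x ∈ Xh, |B y x| ≤ C * ‖y‖ * ‖x‖)
    (hinfsup : ∀ y ∈ Yh,
      c * ‖y‖ ≤ ⨆ x : {x : X // x ∈ Xh ∧ x ≠ 0}, B y x / ‖(x : X)‖)
    (u : Y) :
    ∃ U : Y, U ∈ Yh ∧ (∀ x ∈ Xh, B U x = B u x) ∧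
      (∀ U' : Y, U' ∈ Yh → (∀ x ∈ Xh, B U' x = B u x) → U' = U) ∧
      ‖u - U‖ ≤ (C / c) * ⨅ y : Yh, ‖u - (y : Y)‖ :=
  petrov_galerkin_quasi_optimality_general Yh Xh hdim hYh B C c hc hbdd hinfsup u
end

section
/- Let V be a real Hilbert space with norm ‖·‖_V, let b : V × V → ℝ be a continuous symmetric bilinear form with b(v,v) ≥ 0 for all v, let V_h ⊆ V be a linear subspace, and let T > 0. Let a : [0,T] → (V × V → ℝ) be a family of bilinear forms such that t ↦ a(t)(u,v) is continuous for all u,v ∈ V and, for constants 0 < m ≤ M, a(t)(v,v) ≥ m‖v‖_V² and |a(t)(u,v)| ≤ M‖u‖_V‖v‖_V for all t ∈ [0,T] and u,v ∈ V. Let e : [0,T] → V be continuously differentiable with values in V_h and e(0) = 0, let g : [0,T] → V be continuous, and assume that for every t ∈ [0,T] and every x ∈ V_h one has b(e′(t), x) + a(t)(e(t), x) = a(t)(g(t), x). Then (∫₀ᵀ ‖e(t)‖_V² dt)^{1/2} ≤ (M/m) (∫₀ᵀ ‖g(t)‖_V² dt)^{1/2}. -/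
/-!
Testing the equation with `x = e(t)` and using the symmetry of `b` gives
`d/dt b(e,e) = 2 (a(g,e) - a(e,e))`. Integrating from `e(0) = 0` and using `b(e(T),e(T)) ≥ 0`
yields `∫ a(e,e) ≤ ∫ a(g,e)`; coercivity bounds the left side below by `m ‖e‖²_{L²}`, and
boundedness with Cauchy–Schwarz in `L²(0,T)` bounds the right side by `M ‖g‖_{L²} ‖e‖_{L²}`.
-/

open MeasureTheory Set Filter Topology

theorem continuousOn_apply_apply_of_forall_norm_le {α R E F G : Type*} [TopologicalSpace α]
    [CommSemiring R] [SeminormedAddCommGroup E] [SeminormedAddCommGroup F]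
    [SeminormedAddCommGroup G] [Module R E] [Module R F] [Module R G]
    {a : α → E →ₗ[R] F →ₗ[R] G} {s : Set α} {M : ℝ}
    (ha : ∀ u v, ContinuousOn (fun t => a t u v) s)
    (hbdd : ∀ t ∈ s, ∀ u v, ‖a t u v‖ ≤ M * ‖u‖ * ‖v‖)
    {f : α → E} {h : α → F} (hf : ContinuousOn f s) (hh : ContinuousOn h s) :
    ContinuousOn (fun t => a t (f t) (h t)) s := by
  intro t₀ ht₀
  have hsplit : ∀ t, a t (f t) (h t) =
      a t (f t - f t₀) (h t) + a t (f t₀) (h t - h t₀) + a t (f t₀) (h t₀) := by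
    intro t
    simp only [map_sub, LinearMap.sub_apply]
    abel
  have hf₀ : Tendsto (fun t => ‖f t - f t₀‖) (𝓝[s] t₀) (𝓝 0) := by
    simpa using ((hf t₀ ht₀).sub_const (f t₀)).norm
  have hh₀ : Tendsto (fun t => ‖h t - h t₀‖) (𝓝[s] t₀) (𝓝 0) := by
    simpa using ((hh t₀ ht₀).sub_const (h t₀)).norm
  have h₁ : Tendsto (fun t => a t (f t - f t₀) (h t)) (𝓝[s] t₀) (𝓝 0) := by
    refine squeeze_zero_norm' (eventually_nhdsWithin_of_forall fun t ht => hbdd t ht _ _) ?_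
    simpa using (hf₀.const_mul M).mul (hh t₀ ht₀).norm
  have h₂ : Tendsto (fun t => a t (f t₀) (h t - h t₀)) (𝓝[s] t₀) (𝓝 0) := by
    refine squeeze_zero_norm' (eventually_nhdsWithin_of_forall fun t ht => hbdd t ht _ _) ?_
    simpa using hh₀.const_mul (M * ‖f t₀‖)
  have hlim := (h₁.add h₂).add (ha (f t₀) (h t₀) t₀ ht₀)
  rw [zero_add, zero_add] at hlim
  exact hlim.congr fun t => (hsplit t).symm

theorem integral_two_mul_deriv_apply_self {E : Type*} [NormedAddCommGroup E] [NormedSpace ℝ E]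
    (b : E →L[ℝ] E →L[ℝ] ℝ) (hb : ∀ u v, b u v = b v u) {e e' : ℝ → E}
    (he : ∀ t, HasDerivAt e (e' t) t) (he' : Continuous e') (t₀ t₁ : ℝ) :
    ∫ t in t₀..t₁, 2 * b (e' t) (e t) = b (e t₁) (e t₁) - b (e t₀) (e t₀) := by
  have hderiv : ∀ t, HasDerivAt (fun t => b (e t) (e t)) (2 * b (e' t) (e t)) t := by
    intro t
    have hbe : HasDerivAt (fun t => b (e t)) (b (e' t)) t :=
      b.hasFDerivAt.comp_hasDerivAt t (he t)
    have hbee := hbe.clm_apply (he t)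
    rwa [hb (e t) (e' t), ← two_mul] at hbee
  have he_cont : Continuous e := continuous_iff_continuousAt.2 fun t => (he t).continuousAt
  exact intervalIntegral.integral_eq_sub_of_hasDerivAt (fun t _ => hderiv t)
    ((continuous_const.mul (b.continuous₂.comp (he'.prodMk he_cont))).intervalIntegrable _ _)

theorem intervalIntegral_norm_mul_norm_le_sqrt_mul_sqrt {E : Type*} [NormedAddCommGroup E]
    {f g : ℝ → E} (hf : Continuous f) (hg : Continuous g) {t₀ t₁ : ℝ} (h : t₀ ≤ t₁) :
    ∫ t in t₀..t₁, ‖f t‖ * ‖g t‖ ≤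
      √(∫ t in t₀..t₁, ‖f t‖ ^ 2) * √(∫ t in t₀..t₁, ‖g t‖ ^ 2) := by
  have memLp {φ : ℝ → E} (hφ : Continuous φ) :
      MemLp φ (ENNReal.ofReal 2) (volume.restrict (Ioc t₀ t₁)) := by
    rw [ENNReal.ofReal_ofNat, memLp_two_iff_integrable_sq_norm hφ.aestronglyMeasurable]
    exact ((hφ.norm.pow 2).intervalIntegrable t₀ t₁).1
  simpa only [intervalIntegral.integral_of_le h, Real.rpow_two, Real.sqrt_eq_rpow] using
    integral_mul_norm_le_Lp_mul_Lq Real.HolderConjugate.two_two (memLp hf) (memLp hg)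

theorem integral_le_integral_of_apply_deriv_self_add_eq {E : Type*} [NormedAddCommGroup E]
    [NormedSpace ℝ E] (b : E →L[ℝ] E →L[ℝ] ℝ) (hb : ∀ u v, b u v = b v u)
    (hb_nonneg : ∀ v, 0 ≤ b v v) {e e' : ℝ → E} (he : ∀ t, HasDerivAt e (e' t) t)
    (he' : Continuous e') {t₀ t₁ : ℝ} (h : t₀ ≤ t₁) (he₀ : e t₀ = 0) {p q : ℝ → ℝ}
    (hp : IntervalIntegrable p volume t₀ t₁) (hq : IntervalIntegrable q volume t₀ t₁)
    (hpq : ∀ t ∈ Icc t₀ t₁, b (e' t) (e t) + p t = q t) :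
    ∫ t in t₀..t₁, p t ≤ ∫ t in t₀..t₁, q t := by
  have henergy := integral_two_mul_deriv_apply_self b hb he he' t₀ t₁
  have hdiff : ∫ t in t₀..t₁, 2 * b (e' t) (e t) = 2 * ∫ t in t₀..t₁, (q t - p t) := by
    rw [← intervalIntegral.integral_const_mul]
    refine intervalIntegral.integral_congr fun t ht => ?_
    have := hpq t (uIcc_of_le h ▸ ht)
    linarith
  rw [hdiff, he₀, map_zero, sub_zero, intervalIntegral.integral_sub hq hp] at henergy
  linarith [hb_nonneg (e t₁)]

theorem sqrt_le_div_mul_sqrt_of_mul_le_mul {A B m M : ℝ} (hA : 0 ≤ A) (hm : 0 < m) (hM : 0 ≤ M)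
    (h : m * A ≤ M * (√B * √A)) : √A ≤ M / m * √B := by
  rw [div_mul_eq_mul_div, le_div_iff₀ hm]
  rcases (Real.sqrt_nonneg A).eq_or_lt with hA₀ | hA₀
  · rw [← hA₀, zero_mul]
    positivity
  · refine le_of_mul_le_mul_right ?_ hA₀
    calc √A * m * √A = m * A := by rw [mul_right_comm, Real.mul_self_sqrt hA, mul_comm]
      _ ≤ M * √B * √A := h.trans_eq (mul_assoc _ _ _).symm

theorem semidiscrete_energy_estimate_general
    {V : Type*} [NormedAddCommGroup V] [InnerProductSpace ℝ V]
    (b : V →L[ℝ] V →L[ℝ] ℝ) (hb_symm : ∀ u v : V, b u v = b v u)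
    (hb_nonneg : ∀ v : V, 0 ≤ b v v)
    (Vh : Submodule ℝ V) (T : ℝ) (hT : 0 < T)
    (a : ℝ → V →ₗ[ℝ] V →ₗ[ℝ] ℝ)
    (ha_cont : ∀ u v : V, ContinuousOn (fun t => a t u v) (Set.Icc 0 T))
    (m M : ℝ) (hm : 0 < m) (hmM : m ≤ M)
    (ha_coer : ∀ t ∈ Set.Icc (0 : ℝ) T, ∀ v : V, m * ‖v‖ ^ 2 ≤ a t v v)
    (ha_bdd : ∀ t ∈ Set.Icc (0 : ℝ) T, ∀ u v : V, |a t u v| ≤ M * ‖u‖ * ‖v‖)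
    (e e' g : ℝ → V)
    (he_deriv : ∀ t, HasDerivAt e (e' t) t) (he'_cont : Continuous e')
    (he_mem : ∀ t, e t ∈ Vh) (he0 : e 0 = 0) (hg_cont : Continuous g)
    (heq : ∀ t ∈ Set.Icc (0 : ℝ) T, ∀ x ∈ Vh,
      b (e' t) x + a t (e t) x = a t (g t) x) :
    Real.sqrt (∫ t in (0 : ℝ)..T, ‖e t‖ ^ 2) ≤
      (M / m) * Real.sqrt (∫ t in (0 : ℝ)..T, ‖g t‖ ^ 2) := by
  have he_cont : Continuous e := continuous_iff_continuousAt.2 fun t => (he_deriv t).continuousAt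
  have ha_norm : ∀ t ∈ Icc (0 : ℝ) T, ∀ u v : V, ‖a t u v‖ ≤ M * ‖u‖ * ‖v‖ := by
    simpa only [Real.norm_eq_abs] using ha_bdd
  have ha_int {f : ℝ → V} (hf : Continuous f) :
      IntervalIntegrable (fun t => a t (f t) (e t)) volume 0 T :=
    (continuousOn_apply_apply_of_forall_norm_le ha_cont ha_norm hf.continuousOn
      he_cont.continuousOn).intervalIntegrable_of_Icc hT.le
  refine sqrt_le_div_mul_sqrt_of_mul_le_mul
    (intervalIntegral.integral_nonneg hT.le fun t _ => by positivity) hm (hm.le.trans hmM) ?_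
  calc m * ∫ t in 0..T, ‖e t‖ ^ 2
      = ∫ t in 0..T, m * ‖e t‖ ^ 2 := (intervalIntegral.integral_const_mul _ _).symm
    _ ≤ ∫ t in 0..T, a t (e t) (e t) :=
      intervalIntegral.integral_mono_on hT.le
        ((he_cont.norm.pow 2).intervalIntegrable 0 T |>.const_mul m) (ha_int he_cont)
        fun t ht => ha_coer t ht (e t)
    _ ≤ ∫ t in 0..T, a t (g t) (e t) :=
      integral_le_integral_of_apply_deriv_self_add_eq b hb_symm hb_nonneg he_deriv he'_cont
        hT.le he0 (ha_int he_cont) (ha_int hg_cont) fun t ht => heq t ht (e t) (he_mem t)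
    _ ≤ ∫ t in 0..T, M * (‖g t‖ * ‖e t‖) :=
      intervalIntegral.integral_mono_on hT.le (ha_int hg_cont)
        ((hg_cont.norm.mul he_cont.norm).intervalIntegrable 0 T |>.const_mul M)
        fun t ht => (le_abs_self _).trans ((ha_bdd t ht _ _).trans_eq (mul_assoc _ _ _))
    _ = M * ∫ t in 0..T, ‖g t‖ * ‖e t‖ := intervalIntegral.integral_const_mul _ _
    _ ≤ M * (√(∫ t in 0..T, ‖g t‖ ^ 2) * √(∫ t in 0..T, ‖e t‖ ^ 2)) := by
      gcongr
      · exact hm.le.trans hmM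
      · exact intervalIntegral_norm_mul_norm_le_sqrt_mul_sqrt hg_cont he_cont hT.le

/-- **Energy estimate for the semidiscrete error equation.**
Let `b` be a continuous symmetric positive-semidefinite bilinear form on a real Hilbert
space `V`, let `V_h ⊆ V` be a subspace, and let `a(t)` be a family of bilinear forms,
continuous in `t`, coercive with constant `m` and bounded with constant `M` on `[0,T]`.
If `e` is continuously differentiable with values in `V_h`, `e(0) = 0`, `g` is continuous,
and `b(e′(t), x) + a(t)(e(t), x) = a(t)(g(t), x)` for all `t ∈ [0,T]`, `x ∈ V_h`, then
`(∫₀ᵀ ‖e‖²)^{1/2} ≤ (M/m) (∫₀ᵀ ‖g‖²)^{1/2}`. -/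
theorem semidiscrete_energy_estimate
    {V : Type*} [NormedAddCommGroup V] [InnerProductSpace ℝ V] [CompleteSpace V]
    (b : V →L[ℝ] V →L[ℝ] ℝ) (hb_symm : ∀ u v : V, b u v = b v u)
    (hb_nonneg : ∀ v : V, 0 ≤ b v v)
    (Vh : Submodule ℝ V) (T : ℝ) (hT : 0 < T)
    (a : ℝ → V →ₗ[ℝ] V →ₗ[ℝ] ℝ)
    (ha_cont : ∀ u v : V, ContinuousOn (fun t => a t u v) (Set.Icc 0 T))
    (m M : ℝ) (hm : 0 < m) (hmM : m ≤ M)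
    (ha_coer : ∀ t ∈ Set.Icc (0 : ℝ) T, ∀ v : V, m * ‖v‖ ^ 2 ≤ a t v v)
    (ha_bdd : ∀ t ∈ Set.Icc (0 : ℝ) T, ∀ u v : V, |a t u v| ≤ M * ‖u‖ * ‖v‖)
    (e e' g : ℝ → V)
    (he_deriv : ∀ t, HasDerivAt e (e' t) t) (he'_cont : Continuous e')
    (he_mem : ∀ t, e t ∈ Vh) (he0 : e 0 = 0) (hg_cont : Continuous g)
    (heq : ∀ t ∈ Set.Icc (0 : ℝ) T, ∀ x ∈ Vh,
      b (e' t) x + a t (e t) x = a t (g t) x) :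
    Real.sqrt (∫ t in (0 : ℝ)..T, ‖e t‖ ^ 2) ≤
      (M / m) * Real.sqrt (∫ t in (0 : ℝ)..T, ‖g t‖ ^ 2) :=
  semidiscrete_energy_estimate_general b hb_symm hb_nonneg Vh T hT a ha_cont m M hm hmM ha_coer
    ha_bdd e e' g he_deriv he'_cont he_mem he0 hg_cont heq
end
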